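/- arXiv:2304.06326 — 2 statements merged into one kernel-verified Lean document; each statement's English description precedes it below -/
import Mathlib

section
/- If Q ∈ R^{p×p} is symmetric with ‖Q - I‖ ≤ 1/2 and A ∈ R^{n×p} has full row rank with smallest singular value σ, then for λ ≥ 0, ‖A^T(A Q A^T + λI)^{-1} - A^T(A A^T + λI)^{-1}‖ ≤ C ‖Q - I‖ / σ for a constant C depending only on ‖A‖/σ. -/
open Matrix

/-- Euclidean norm of a vector in `ℝ^k`. -/
noncomputable def e2 {k : ℕ} (v : Fin k → ℝ) : ℝ := Real.sqrt (∑ i, v i ^ 2)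

/-- Spectral (ℓ2 operator) norm of a matrix. -/
noncomputable def spec {m p : ℕ} (A : Matrix (Fin m) (Fin p) ℝ) : ℝ :=
  ⨆ v : {v : Fin p → ℝ // e2 v ≤ 1}, e2 (A.mulVec v.1)

/-!
Put `M = A Q Aᵀ + λ I` and `M₀ = A Aᵀ + λ I`. The resolvent identity gives
`Aᵀ M⁻¹ - Aᵀ M₀⁻¹ = (Aᵀ M⁻¹) A (I - Q) (Aᵀ M₀⁻¹)`. Since `‖Q - I‖ ≤ 1/2`, both `Q` and `I` are
`≥ I/2` as quadratic forms, so `N ∈ {M, M₀}` satisfies `⟪N y, y⟫ ≥ ½ ‖Aᵀ y‖² ≥ ½ σ² ‖y‖²`.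
Testing this at `y = N⁻¹ x` gives `‖Aᵀ N⁻¹‖ ≤ 2/σ`, hence the bound with `C t = 4 t`.
-/

lemma e2_eq_norm {k : ℕ} (v : Fin k → ℝ) : e2 v = ‖WithLp.toLp 2 v‖ := by
  simp [e2, EuclideanSpace.norm_eq]

lemma e2_nonneg {k : ℕ} (v : Fin k → ℝ) : 0 ≤ e2 v := Real.sqrt_nonneg _

lemma sq_e2 {k : ℕ} (v : Fin k → ℝ) : e2 v ^ 2 = v ⬝ᵥ v := by
  rw [e2_eq_norm, ← real_inner_self_eq_norm_sq]; rfl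

lemma abs_dotProduct_le {k : ℕ} (v w : Fin k → ℝ) : |v ⬝ᵥ w| ≤ e2 v * e2 w := by
  rw [e2_eq_norm, e2_eq_norm, dotProduct_comm]
  exact abs_real_inner_le_norm (WithLp.toLp 2 v) (WithLp.toLp 2 w)

lemma e2_smul {k : ℕ} (t : ℝ) (v : Fin k → ℝ) : e2 (t • v) = |t| * e2 v := by
  rw [e2_eq_norm, e2_eq_norm, WithLp.toLp_smul, norm_smul, Real.norm_eq_abs]

lemma e2_neg {k : ℕ} (v : Fin k → ℝ) : e2 (-v) = e2 v := by
  rw [e2_eq_norm, e2_eq_norm, WithLp.toLp_neg, norm_neg]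

lemma e2_eq_zero {k : ℕ} {v : Fin k → ℝ} : e2 v = 0 ↔ v = 0 := by
  rw [e2_eq_norm, norm_eq_zero, WithLp.toLp_eq_zero]

lemma e2_mulVec_le_opNorm {m p : ℕ} (A : Matrix (Fin m) (Fin p) ℝ) (v : Fin p → ℝ) :
    e2 (A *ᵥ v) ≤ ‖LinearMap.toContinuousLinearMap (toEuclideanLin A)‖ * e2 v := by
  rw [e2_eq_norm, e2_eq_norm]
  exact (LinearMap.toContinuousLinearMap (toEuclideanLin A)).le_opNorm (WithLp.toLp 2 v)

lemma spec_nonneg {m p : ℕ} (A : Matrix (Fin m) (Fin p) ℝ) : 0 ≤ spec A :=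
  Real.iSup_nonneg fun _ => e2_nonneg _

lemma le_spec {m p : ℕ} (A : Matrix (Fin m) (Fin p) ℝ) {v : Fin p → ℝ} (hv : e2 v ≤ 1) :
    e2 (A *ᵥ v) ≤ spec A := by
  refine le_ciSup (f := fun v : {v : Fin p → ℝ // e2 v ≤ 1} => e2 (A *ᵥ v.1)) ?_ ⟨v, hv⟩
  refine ⟨‖LinearMap.toContinuousLinearMap (toEuclideanLin A)‖, ?_⟩
  rintro _ ⟨u, rfl⟩
  exact (e2_mulVec_le_opNorm A u.1).trans (mul_le_of_le_one_right (norm_nonneg _) u.2)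

lemma e2_mulVec_le_spec {m p : ℕ} (A : Matrix (Fin m) (Fin p) ℝ) (v : Fin p → ℝ) :
    e2 (A *ᵥ v) ≤ spec A * e2 v := by
  rcases eq_or_ne v 0 with rfl | hv
  · simp [e2]
  have hpos : 0 < e2 v := (e2_nonneg v).lt_of_ne' (e2_eq_zero.not.mpr hv)
  have hunit : e2 ((e2 v)⁻¹ • v) ≤ 1 := by
    rw [e2_smul, abs_of_pos (inv_pos.mpr hpos), inv_mul_cancel₀ hpos.ne']
  have := le_spec A hunit
  rw [mulVec_smul, e2_smul, abs_of_pos (inv_pos.mpr hpos), inv_mul_le_iff₀ hpos] at this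
  linarith

lemma spec_le_of_forall {m p : ℕ} {A : Matrix (Fin m) (Fin p) ℝ} {c : ℝ} (hc : 0 ≤ c)
    (h : ∀ v, e2 (A *ᵥ v) ≤ c * e2 v) : spec A ≤ c :=
  Real.iSup_le (fun v => (h v.1).trans (mul_le_of_le_one_right hc v.2)) hc

lemma spec_mul_le {m p q : ℕ} (A : Matrix (Fin m) (Fin p) ℝ) (B : Matrix (Fin p) (Fin q) ℝ) :
    spec (A * B) ≤ spec A * spec B :=
  spec_le_of_forall (mul_nonneg (spec_nonneg A) (spec_nonneg B)) fun v => by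
    rw [← mulVec_mulVec, mul_assoc]
    exact (e2_mulVec_le_spec A _).trans
      (mul_le_mul_of_nonneg_left (e2_mulVec_le_spec B v) (spec_nonneg A))

lemma spec_neg {m p : ℕ} (A : Matrix (Fin m) (Fin p) ℝ) : spec (-A) = spec A := by
  simp only [spec, neg_mulVec, e2_neg]

lemma le_quadForm_of_spec_sub_one_le {p : ℕ} {Q : Matrix (Fin p) (Fin p) ℝ} {ε : ℝ}
    (hQ : spec (Q - 1) ≤ ε) (w : Fin p → ℝ) : (1 - ε) * (w ⬝ᵥ w) ≤ (Q *ᵥ w) ⬝ᵥ w := by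
  have hsplit : (Q *ᵥ w) ⬝ᵥ w = w ⬝ᵥ w + ((Q - 1) *ᵥ w) ⬝ᵥ w := by
    rw [sub_mulVec, one_mulVec, sub_dotProduct]; ring
  have hcs := neg_le_of_abs_le (abs_dotProduct_le ((Q - 1) *ᵥ w) w)
  have hQw : e2 ((Q - 1) *ᵥ w) * e2 w ≤ ε * e2 w ^ 2 := by
    rw [sq, ← mul_assoc]
    exact mul_le_mul_of_nonneg_right ((e2_mulVec_le_spec _ w).trans
      (mul_le_mul_of_nonneg_right hQ (e2_nonneg w))) (e2_nonneg w)
  rw [hsplit, ← sq_e2]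
  linarith

section Coercive

variable {n p : ℕ} {N : Matrix (Fin n) (Fin n) ℝ} {c : ℝ}

lemma isUnit_of_le_quadForm (hc : 0 < c) (hN : ∀ y, c * (y ⬝ᵥ y) ≤ (N *ᵥ y) ⬝ᵥ y) :
    IsUnit N := by
  rw [isUnit_iff_isUnit_det, isUnit_iff_ne_zero]
  intro hdet
  obtain ⟨v, hv, hNv⟩ := exists_mulVec_eq_zero_iff.mpr hdet
  have hvv : v ⬝ᵥ v ≤ 0 := by
    simpa [hNv, mul_nonpos_iff, hc.not_ge, hc.le] using hN v
  exact hv (dotProduct_self_eq_zero.mp (hvv.antisymm (sq_e2 v ▸ sq_nonneg _)))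

lemma isUnit_of_le_quadForm_mulVec {B : Matrix (Fin p) (Fin n) ℝ} {σ : ℝ} (hσ : 0 < σ)
    (hc : 0 < c) (hB : ∀ y, σ * e2 y ≤ e2 (B *ᵥ y))
    (hN : ∀ y, c * e2 (B *ᵥ y) ^ 2 ≤ (N *ᵥ y) ⬝ᵥ y) : IsUnit N :=
  isUnit_of_le_quadForm (c := c * σ ^ 2) (by positivity) fun y =>
    calc c * σ ^ 2 * (y ⬝ᵥ y) = c * (σ * e2 y) ^ 2 := by rw [← sq_e2]; ring
      _ ≤ c * e2 (B *ᵥ y) ^ 2 := by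
        gcongr
        · exact mul_nonneg hσ.le (e2_nonneg y)
        · exact hB y
      _ ≤ (N *ᵥ y) ⬝ᵥ y := hN y

/-- With `y = N⁻¹ x`: `c ‖B y‖² ≤ ⟪x, y⟫ ≤ ‖x‖ ‖y‖ ≤ ‖x‖ ‖B y‖ / σ`. -/
lemma e2_mulVec_inv_mulVec_le {B : Matrix (Fin p) (Fin n) ℝ} {σ : ℝ} (hσ : 0 < σ) (hc : 0 < c)
    (hB : ∀ y, σ * e2 y ≤ e2 (B *ᵥ y)) (hN : ∀ y, c * e2 (B *ᵥ y) ^ 2 ≤ (N *ᵥ y) ⬝ᵥ y)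
    (x : Fin n → ℝ) : e2 (B *ᵥ (N⁻¹ *ᵥ x)) ≤ e2 x / (c * σ) := by
  set y := N⁻¹ *ᵥ x
  have hNy : N *ᵥ y = x := by
    rw [mulVec_mulVec, mul_nonsing_inv _ ((isUnit_iff_isUnit_det N).mp
      (isUnit_of_le_quadForm_mulVec hσ hc hB hN)), one_mulVec]
  have hquad : c * σ * e2 (B *ᵥ y) * e2 (B *ᵥ y) ≤ e2 x * e2 (B *ᵥ y) :=
    calc c * σ * e2 (B *ᵥ y) * e2 (B *ᵥ y) = σ * (c * e2 (B *ᵥ y) ^ 2) := by ring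
      _ ≤ σ * (e2 x * e2 y) := by
        refine mul_le_mul_of_nonneg_left ?_ hσ.le
        simpa only [hNy] using (hN y).trans (le_of_abs_le (abs_dotProduct_le (N *ᵥ y) y))
      _ ≤ e2 x * e2 (B *ᵥ y) := by nlinarith [hB y, e2_nonneg x]
  rw [le_div_iff₀ (by positivity)]
  rcases (e2_nonneg (B *ᵥ y)).eq_or_lt with hzero | hpos
  · rw [← hzero, zero_mul]; exact e2_nonneg x
  · nlinarith [le_of_mul_le_mul_right hquad hpos]

end Coercive

section Ridge

variable {n p : ℕ} {A : Matrix (Fin n) (Fin p) ℝ} {P : Matrix (Fin p) (Fin p) ℝ} {c σ lam : ℝ}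

lemma le_quadForm_ridge (hP : ∀ w, c * (w ⬝ᵥ w) ≤ (P *ᵥ w) ⬝ᵥ w) (hlam : 0 ≤ lam)
    (y : Fin n → ℝ) : c * e2 (Aᵀ *ᵥ y) ^ 2 ≤ ((A * P * Aᵀ + lam • 1) *ᵥ y) ⬝ᵥ y := by
  have hsplit : ((A * P * Aᵀ + lam • 1) *ᵥ y) ⬝ᵥ y
      = (P *ᵥ (Aᵀ *ᵥ y)) ⬝ᵥ (Aᵀ *ᵥ y) + lam * (y ⬝ᵥ y) := by
    rw [add_mulVec, add_dotProduct, ← mulVec_mulVec, ← mulVec_mulVec, dotProduct_comm,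
      dotProduct_mulVec, ← mulVec_transpose, dotProduct_comm, smul_mulVec, one_mulVec,
      smul_dotProduct, smul_eq_mul]
  rw [hsplit, sq_e2]
  nlinarith [hP (Aᵀ *ᵥ y), sq_e2 y, sq_nonneg (e2 y)]

lemma isUnit_ridge (hσ : 0 < σ) (hA : ∀ y, σ * e2 y ≤ e2 (Aᵀ *ᵥ y)) (hc : 0 < c)
    (hP : ∀ w, c * (w ⬝ᵥ w) ≤ (P *ᵥ w) ⬝ᵥ w) (hlam : 0 ≤ lam) :
    IsUnit (A * P * Aᵀ + lam • 1) :=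
  isUnit_of_le_quadForm_mulVec hσ hc hA (le_quadForm_ridge hP hlam)

lemma spec_transpose_mul_ridge_inv_le (hσ : 0 < σ) (hA : ∀ y, σ * e2 y ≤ e2 (Aᵀ *ᵥ y))
    (hc : 0 < c) (hP : ∀ w, c * (w ⬝ᵥ w) ≤ (P *ᵥ w) ⬝ᵥ w) (hlam : 0 ≤ lam) :
    spec (Aᵀ * (A * P * Aᵀ + lam • 1)⁻¹) ≤ 1 / (c * σ) :=
  spec_le_of_forall (by positivity) fun x => by
    rw [← mulVec_mulVec, one_div_mul_eq_div]
    exact e2_mulVec_inv_mulVec_le hσ hc hA (le_quadForm_ridge hP hlam) x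

end Ridge

/-- If `Q` is symmetric with `‖Q - I‖ ≤ 1/2` and `A` has full row rank with
smallest singular value `σ > 0`, then for `λ ≥ 0`,
`‖Aᵀ(AQAᵀ + λI)⁻¹ - Aᵀ(AAᵀ + λI)⁻¹‖ ≤ C ‖Q - I‖ / σ` with `C` depending only
on `‖A‖/σ`. -/
theorem perturbed_metric_ridge_bound :
    ∃ C : ℝ → ℝ,
      ∀ (n p : ℕ) (A : Matrix (Fin n) (Fin p) ℝ) (Q : Matrix (Fin p) (Fin p) ℝ)
        (σ lam : ℝ),
        A.rank = n →
        0 < σ →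
        (∀ v : Fin n → ℝ, σ * e2 v ≤ e2 (A.vecMul v)) →
        Q.IsSymm →
        spec (Q - 1) ≤ 1 / 2 →
        0 ≤ lam →
        spec (A.transpose * (A * Q * A.transpose + lam • (1 : Matrix (Fin n) (Fin n) ℝ))⁻¹ -
              A.transpose * (A * A.transpose + lam • (1 : Matrix (Fin n) (Fin n) ℝ))⁻¹)
          ≤ C (spec A / σ) * spec (Q - 1) / σ := by
  refine ⟨fun t => 4 * t, fun n p A Q σ lam _ hσ hσA _ hQ hlam => ?_⟩
  have hAt : ∀ y, σ * e2 y ≤ e2 (Aᵀ *ᵥ y) := by simpa only [mulVec_transpose] using hσA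
  have hQ_ge : ∀ w, 1 / 2 * (w ⬝ᵥ w) ≤ (Q *ᵥ w) ⬝ᵥ w := by
    simpa only [show (1 : ℝ) - 1 / 2 = 1 / 2 by norm_num]
      using le_quadForm_of_spec_sub_one_le hQ
  have hone_ge : ∀ w : Fin p → ℝ, 1 / 2 * (w ⬝ᵥ w) ≤ ((1 : Matrix _ _ ℝ) *ᵥ w) ⬝ᵥ w :=
    fun w => by rw [one_mulVec, ← sq_e2]; linarith [sq_nonneg (e2 w)]
  have hM := spec_transpose_mul_ridge_inv_le hσ hAt one_half_pos hQ_ge hlam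
  have hM₀ := spec_transpose_mul_ridge_inv_le hσ hAt one_half_pos hone_ge hlam
  rw [Matrix.mul_one] at hM₀
  have hresolvent := Matrix.inv_sub_inv (iff_of_true (isUnit_ridge hσ hAt one_half_pos hQ_ge hlam)
    (by simpa only [Matrix.mul_one] using isUnit_ridge hσ hAt one_half_pos hone_ge hlam))
  set M := A * Q * Aᵀ + lam • (1 : Matrix (Fin n) (Fin n) ℝ)
  set M₀ := A * Aᵀ + lam • (1 : Matrix (Fin n) (Fin n) ℝ)
  have hdiff : Aᵀ * M⁻¹ - Aᵀ * M₀⁻¹ = Aᵀ * M⁻¹ * A * -(Q - 1) * (Aᵀ * M₀⁻¹) := by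
    rw [← Matrix.mul_sub, hresolvent, show M₀ - M = A * -(Q - 1) * Aᵀ by
      rw [add_sub_add_right_eq_sub, neg_sub, Matrix.mul_sub, Matrix.mul_one, Matrix.sub_mul]]
    simp only [Matrix.mul_assoc]
  have hA_nonneg := spec_nonneg A
  have hQ_nonneg := spec_nonneg (Q - 1)
  have hM₀_nonneg := spec_nonneg (Aᵀ * M₀⁻¹)
  calc spec (Aᵀ * M⁻¹ - Aᵀ * M₀⁻¹)
      ≤ spec (Aᵀ * M⁻¹) * spec A * spec (Q - 1) * spec (Aᵀ * M₀⁻¹) := by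
        rw [hdiff, ← spec_neg (Q - 1)]
        refine (spec_mul_le _ _).trans (mul_le_mul_of_nonneg_right ?_ (spec_nonneg _))
        refine (spec_mul_le _ _).trans (mul_le_mul_of_nonneg_right ?_ (spec_nonneg _))
        exact spec_mul_le _ _
    _ ≤ 1 / (1 / 2 * σ) * spec A * spec (Q - 1) * (1 / (1 / 2 * σ)) := by gcongr
    _ = 4 * (spec A / σ) * spec (Q - 1) / σ := by ring
end

section
/- In the quadratic-kernel setting with feature map Φ(x) = [a1 x, a2 x x^T] and x_i = e_i, the kernel ridgeless estimator f̂(x) = (a1²+a2²)^{-1} Σ_i (a1² x_i + a2² x_i²) β_i differs from the linear target f*(x) = Σ_i β_i x_i by a function represented by (a2²/(a1²+a2²))[-β, diag(β)], and consequently, for x ∼ N(0, c I_p), E[(f̂(x) - f*(x))²] = (a2²/(a1²+a2²))² ((c + 2c²) Σ_i β_i² + c² (Σ_i β_i)²). -/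
/-!
With the data `x_i = e_i`, the estimator differs from the target by `q • Σ_i β_i (x_i² - x_i)`,
where `q = a2² / (a1² + a2²)`. Under `N(0, c I)` the summands are independent, so the second
moment of this sum is `Var[x² - x] Σ β_i² + E[x² - x]² (Σ β_i)²`, and for `x ∼ N(0, c)` one has
`E[x² - x] = c` and `Var[x² - x] = E x⁴ - 2 E x³ + E x² - c² = c + 2c²`. The Gaussian moments
are the derivatives at `0` of the moment generating function `t ↦ exp (c t² / 2)`.
-/

open Matrix MeasureTheory ProbabilityTheory Finset
open scoped NNReal

section GaussianMoments

open Polynomial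

noncomputable def expHalfSqDerivPoly (v : ℝ) : ℕ → ℝ[X]
  | 0 => 1
  | n + 1 => derivative (expHalfSqDerivPoly v n) + C v * X * expHalfSqDerivPoly v n

theorem iteratedDeriv_exp_mul_sq_div_two (v : ℝ) (n : ℕ) :
    iteratedDeriv n (fun t => Real.exp (v * t ^ 2 / 2)) =
      fun t => (expHalfSqDerivPoly v n).eval t * Real.exp (v * t ^ 2 / 2) := by
  induction n with
  | zero => simp [expHalfSqDerivPoly]
  | succ n ih =>
    ext t
    rw [iteratedDeriv_succ, ih]
    have hexp : HasDerivAt (fun t => Real.exp (v * t ^ 2 / 2))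
        (Real.exp (v * t ^ 2 / 2) * (v * t)) t := by
      convert ((hasDerivAt_pow 2 t).const_mul v).div_const 2 |>.exp using 1
      ring
    refine (((expHalfSqDerivPoly v n).hasDerivAt t).mul hexp).deriv.trans ?_
    simp only [expHalfSqDerivPoly, eval_add, eval_mul, eval_C, eval_X]
    ring

variable (v : ℝ≥0)

theorem integral_pow_gaussianReal_zero (n : ℕ) :
    ∫ x, x ^ n ∂gaussianReal 0 v = (expHalfSqDerivPoly v n).eval 0 := by
  have h := iteratedDeriv_mgf_zero (X := id) (μ := gaussianReal 0 v) (by simp) n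
  simp only [mgf_id_gaussianReal, zero_mul, zero_add, iteratedDeriv_exp_mul_sq_div_two] at h
  simpa using h.symm

theorem integral_sq_gaussianReal_zero : ∫ x, x ^ 2 ∂gaussianReal 0 v = v := by
  simp [integral_pow_gaussianReal_zero, expHalfSqDerivPoly]

theorem integral_pow_three_gaussianReal_zero : ∫ x, x ^ 3 ∂gaussianReal 0 v = 0 := by
  simp [integral_pow_gaussianReal_zero, expHalfSqDerivPoly]

theorem integral_pow_four_gaussianReal_zero : ∫ x, x ^ 4 ∂gaussianReal 0 v = 3 * v ^ 2 := by
  simp only [integral_pow_gaussianReal_zero, expHalfSqDerivPoly, derivative_one, mul_one,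
    zero_add, derivative_mul, derivative_C, zero_mul, derivative_X, derivative_add, mul_zero,
    add_zero, eval_add, eval_mul, eval_C, eval_X]
  ring

theorem integrable_pow_gaussianReal (μ : ℝ) (n : ℕ) :
    Integrable (fun x => x ^ n) (gaussianReal μ v) :=
  integrable_pow_of_mem_interior_integrableExpSet (X := id) (by simp) n

theorem integral_sq_sub_self_gaussianReal : ∫ x, (x ^ 2 - x) ∂gaussianReal 0 v = v := by
  have hint := integrable_pow_gaussianReal v 0
  rw [integral_sub (hint 2) (by simpa using hint 1), integral_sq_gaussianReal_zero,
    integral_id_gaussianReal, sub_zero]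

theorem integral_sq_sub_self_sq_gaussianReal :
    ∫ x, (x ^ 2 - x) ^ 2 ∂gaussianReal 0 v = v + 3 * v ^ 2 := by
  have hint := integrable_pow_gaussianReal v 0
  have h43 : Integrable (fun x : ℝ => x ^ 4 - 2 * x ^ 3) (gaussianReal 0 v) :=
    (hint 4).sub ((hint 3).const_mul 2)
  calc ∫ x, (x ^ 2 - x) ^ 2 ∂gaussianReal 0 v
      = ∫ x, (x ^ 4 - 2 * x ^ 3 + x ^ 2) ∂gaussianReal 0 v := by congr with x; ring
    _ = (∫ x, x ^ 4 ∂gaussianReal 0 v) - 2 * (∫ x, x ^ 3 ∂gaussianReal 0 v)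
          + ∫ x, x ^ 2 ∂gaussianReal 0 v := by
      rw [integral_add h43 (hint 2), integral_sub (hint 4) ((hint 3).const_mul 2),
        integral_const_mul]
    _ = v + 3 * v ^ 2 := by
      rw [integral_pow_four_gaussianReal_zero, integral_pow_three_gaussianReal_zero,
        integral_sq_gaussianReal_zero]
      ring

theorem memLp_sq_sub_self_gaussianReal : MemLp (fun x => x ^ 2 - x) 2 (gaussianReal 0 v) := by
  refine (memLp_two_iff_integrable_sq (by fun_prop)).2 ?_
  have hint := integrable_pow_gaussianReal v 0
  have h : Integrable (fun x : ℝ => x ^ 4 - 2 * x ^ 3 + x ^ 2) (gaussianReal 0 v) :=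
    ((hint 4).sub ((hint 3).const_mul 2)).add (hint 2)
  exact h.congr (ae_of_all _ fun x => by ring)

theorem variance_sq_sub_self_gaussianReal :
    Var[fun x => x ^ 2 - x; gaussianReal 0 v] = v + 2 * v ^ 2 := by
  rw [variance_eq_sub (memLp_sq_sub_self_gaussianReal v)]
  simp only [Pi.pow_apply, integral_sq_sub_self_sq_gaussianReal,
    integral_sq_sub_self_gaussianReal]
  ring

end GaussianMoments

theorem integral_sq_sum_mul_pi {ι Ω : Type*} [Fintype ι] [MeasurableSpace Ω] (μ : Measure Ω)
    [IsProbabilityMeasure μ] {X : Ω → ℝ} (hX : MemLp X 2 μ) (a : ι → ℝ) :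
    ∫ ω, (∑ i, a i * X (ω i)) ^ 2 ∂Measure.pi (fun _ => μ) =
      Var[X; μ] * ∑ i, a i ^ 2 + μ[X] ^ 2 * (∑ i, a i) ^ 2 := by
  set S : (ι → Ω) → ℝ := ∑ i, fun ω => a i * X (ω i) with hS_def
  have hS : ∀ ω, S ω = ∑ i, a i * X (ω i) := fun ω => by simp [S]
  have hcoord : ∀ i, MemLp (fun ω : ι → Ω => X (ω i)) 2 (Measure.pi fun _ => μ) :=
    fun i => hX.comp_measurePreserving (measurePreserving_eval _ i)
  have hmean : ∫ ω, S ω ∂Measure.pi (fun _ => μ) = μ[X] * ∑ i, a i := by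
    simp_rw [hS]
    rw [integral_finsetSum _ fun i _ => ((hcoord i).integrable one_le_two).const_mul _,
      mul_sum]
    refine sum_congr rfl fun i _ => ?_
    rw [integral_const_mul, integral_comp_eval hX.aestronglyMeasurable, mul_comm]
  have hvar : Var[S; Measure.pi fun _ => μ] = Var[X; μ] * ∑ i, a i ^ 2 := by
    rw [hS_def, variance_sum_pi fun i => hX.const_mul (a i), mul_sum]
    exact sum_congr rfl fun i _ => by rw [variance_const_mul, mul_comm]
  have hSL2 : MemLp S 2 (Measure.pi fun _ => μ) :=
    memLp_finsetSum' _ fun i _ => (hcoord i).const_mul (a i)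
  have h := variance_eq_sub hSL2
  rw [hvar, hmean] at h
  simp only [Pi.pow_apply, hS] at h
  linarith

theorem integral_sq_sum_mul_sq_sub_self_gaussianReal_pi {ι : Type*} [Fintype ι] (v : ℝ≥0)
    (a : ι → ℝ) :
    ∫ x, (∑ i, a i * (x i ^ 2 - x i)) ^ 2 ∂Measure.pi (fun _ => gaussianReal 0 v) =
      (v + 2 * v ^ 2) * ∑ i, a i ^ 2 + v ^ 2 * (∑ i, a i) ^ 2 := by
  rw [integral_sq_sum_mul_pi _ (memLp_sq_sub_self_gaussianReal v),
    variance_sq_sub_self_gaussianReal, integral_sq_sub_self_gaussianReal]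

theorem Fin.sum_univ_castLE_of_eq_zero {M : Type*} [AddCommMonoid M] {n p : ℕ} (h : n ≤ p)
    {f : Fin p → M} (hf : ∀ j : Fin p, n ≤ (j : ℕ) → f j = 0) :
    ∑ i : Fin n, f (Fin.castLE h i) = ∑ j, f j := by
  refine Fintype.sum_of_injective _ (Fin.castLE_injective h) _ _ (fun j hj => hf j ?_)
    fun _ => rfl
  by_contra! hjn
  exact hj ⟨⟨j, hjn⟩, rfl⟩

/-- In the quadratic-kernel setting with data `x_i = e_i`, the ridgeless
estimator `f̂(x) = (a1²+a2²)⁻¹ Σ_i (a1² x_i + a2² x_i²) β_i` differs from the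
linear target `f*(x) = Σ_i β_i x_i` by the function represented by
`(a2²/(a1²+a2²)) [-β, diag(β)]`, and for `x ∼ N(0, c I_p)`,
`E[(f̂(x) - f*(x))²] = (a2²/(a1²+a2²))² ((c + 2c²) Σ β_i² + c² (Σ β_i)²)`. -/
theorem quadratic_kernel_generalization_error (n p : ℕ) (hnp : n ≤ p)
    (a1 a2 : ℝ) (ha : a1 ^ 2 + a2 ^ 2 ≠ 0) (c : NNReal) (β : Fin n → ℝ) :
    let βext : Fin p → ℝ := fun j => if h : (j : ℕ) < n then β ⟨j, h⟩ else 0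
    let fhat : (Fin p → ℝ) → ℝ := fun x =>
      (a1 ^ 2 + a2 ^ 2)⁻¹ *
        ∑ i : Fin n,
          (a1 ^ 2 * x (Fin.castLE hnp i) + a2 ^ 2 * x (Fin.castLE hnp i) ^ 2) * β i
    let fstar : (Fin p → ℝ) → ℝ := fun x => ∑ i : Fin n, β i * x (Fin.castLE hnp i)
    -- representation of the difference by `(a2²/(a1²+a2²)) [-β, diag(β)]`
    (∀ x : Fin p → ℝ,
      fhat x - fstar x =
        (-(a2 ^ 2 / (a1 ^ 2 + a2 ^ 2)) • βext) ⬝ᵥ x +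
          x ⬝ᵥ ((a2 ^ 2 / (a1 ^ 2 + a2 ^ 2)) • Matrix.diagonal βext).mulVec x) ∧
    -- Gaussian generalization error
    ∫ x : Fin p → ℝ, (fhat x - fstar x) ^ 2
        ∂(Measure.pi fun _ : Fin p => gaussianReal 0 c) =
      (a2 ^ 2 / (a1 ^ 2 + a2 ^ 2)) ^ 2 *
        (((c : ℝ) + 2 * (c : ℝ) ^ 2) * (∑ i, β i ^ 2) + (c : ℝ) ^ 2 * (∑ i, β i) ^ 2) := by
  intro βext fhat fstar
  have hβ : ∀ i, βext (Fin.castLE hnp i) = β i := fun i => by simp [βext]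
  have hsum : ∀ F : Fin p → ℝ, ∑ j, βext j * F j = ∑ i, β i * F (Fin.castLE hnp i) := by
    intro F
    rw [← Fin.sum_univ_castLE_of_eq_zero hnp fun j hj => by simp [βext, hj.not_gt]]
    simp only [hβ]
  have hdiff : ∀ x,
      fhat x - fstar x = a2 ^ 2 / (a1 ^ 2 + a2 ^ 2) * ∑ j, βext j * (x j ^ 2 - x j) := by
    intro x
    simp only [hsum, fhat, fstar, mul_sum, ← sum_sub_distrib]
    refine sum_congr rfl fun i _ => ?_
    field_simp
    ring
  refine ⟨fun x => ?_, ?_⟩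
  · simp only [hdiff, smul_mulVec, mulVec_diagonal, dotProduct, Pi.smul_apply, smul_eq_mul,
      mul_sum, ← sum_add_distrib]
    exact sum_congr rfl fun j _ => by ring
  · simp_rw [hdiff, mul_pow]
    rw [integral_const_mul, integral_sq_sum_mul_sq_sub_self_gaussianReal_pi]
    have hsq := hsum βext
    have hone := hsum fun _ => 1
    simp only [hβ, mul_one, ← sq] at hsq hone
    rw [hsq, hone]
end
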